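/- In the lazy reduction algorithm (which repeatedly, for j increasing, while column j of R is nonzero and some earlier column i < j has the same low, subtracts α = R[low, j]/R[low, i] times column i from column j, records the same column operation in V, and records the inverse row operation in U), the following invariant holds at termination: if columns τ_i and τ_j of R are such that τ_i < τ_j and low_R(τ_i) < low_R(τ_j) (treating a zero column as having low equal to a dummy value smaller than all row indices), then U[τ_i, τ_j] = 0 and V[τ_i, τ_j] = 0. -/
import Mathlib


open Matrix

variable {F : Type*} [Field F] [DecidableEq F] {m n : ℕ}

/-- 1-based row index of the lowest nonzero entry of column `j`;
`0` (the dummy minimal value) if the column is zero. -/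
def lowNat (R : Matrix (Fin m) (Fin n) F) (j : Fin n) : ℕ :=
  (Finset.univ.filter fun i : Fin m => R i j ≠ 0).sup fun i => i.val + 1

/-- Subtract `α` times column `i` from column `j`. -/
def addColMul {k : ℕ} (M : Matrix (Fin k) (Fin n) F) (α : F) (i j : Fin n) :
    Matrix (Fin k) (Fin n) F :=
  fun a b => if b = j then M a b - α * M a i else M a b

/-- Add `α` times row `j` to row `i`. -/
def addRowMul (M : Matrix (Fin n) (Fin n) F) (α : F) (i j : Fin n) :
    Matrix (Fin n) (Fin n) F :=
  fun a b => if a = i then M a b + α * M j b else M a b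

/-- The state `(R, V, U)` maintained by the lazy reduction. -/
structure RedState (F : Type*) (m n : ℕ) where
  R : Matrix (Fin m) (Fin n) F
  V : Matrix (Fin n) (Fin n) F
  U : Matrix (Fin n) (Fin n) F

/-- Inner while-loop of the lazy reduction for column `j`: while the column is
nonzero and some earlier column has the same low, subtract
`α = R[low, j] / R[low, i]` times column `i` from column `j` (in `R` and `V`)
and record the inverse row operation in `U`.  Each iteration strictly decreases
the low of column `j`, so fuel `m + 1` always suffices. -/
noncomputable def reduceColAux : ℕ → RedState F m n → Fin n → RedState F m n
  | 0, s, _ => s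
  | fuel + 1, s, j =>
    if h : lowNat s.R j ≠ 0 ∧ ∃ i : Fin n, i < j ∧ lowNat s.R i = lowNat s.R j then
      let i := h.2.choose
      let r : Fin m := ⟨lowNat s.R j - 1, by
        have hle : lowNat s.R j ≤ m := Finset.sup_le fun a _ => a.isLt
        have := h.1
        omega⟩
      let α := s.R r j / s.R r i
      reduceColAux fuel ⟨addColMul s.R α i j, addColMul s.V α i j, addRowMul s.U α i j⟩ j
    else s

/-- The lazy reduction algorithm: starting from `R = D`, `V = U = 1`, process
the columns in increasing order. -/
noncomputable def lazyReduce (D : Matrix (Fin m) (Fin n) F) : RedState F m n :=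
  (List.finRange n).foldl (fun s j => reduceColAux (m + 1) s j) ⟨D, 1, 1⟩

lemma le_lowNat (R : Matrix (Fin m) (Fin n) F) (j : Fin n) (a : Fin m) (h : R a j ≠ 0) :
    a.val + 1 ≤ lowNat R j :=
  Finset.le_sup (f := fun i : Fin m => i.val + 1) (by simp [h])

lemma lowNat_attained (R : Matrix (Fin m) (Fin n) F) (j : Fin n) (h : lowNat R j ≠ 0) :
    ∃ a : Fin m, R a j ≠ 0 ∧ a.val + 1 = lowNat R j := by
  by_cases hne : (Finset.univ.filter fun i : Fin m => R i j ≠ 0).Nonempty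
  · obtain ⟨a, ha, hs⟩ := Finset.exists_mem_eq_sup _ hne (fun i : Fin m => i.val + 1)
    exact ⟨a, by simpa using ha, hs.symm⟩
  · rw [Finset.not_nonempty_iff_eq_empty] at hne
    exact absurd (by simp [lowNat, hne]) h

lemma lowNat_congr {R R' : Matrix (Fin m) (Fin n) F} {b : Fin n}
    (h : ∀ a, R a b = R' a b) : lowNat R b = lowNat R' b := by
  simp only [lowNat, h]

lemma lowNat_addColMul_ne (R : Matrix (Fin m) (Fin n) F) (α : F) (i j b : Fin n)
    (hb : b ≠ j) : lowNat (addColMul R α i j) b = lowNat R b :=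
  lowNat_congr fun a => by simp [addColMul, hb]

lemma lowNat_addColMul_lt (R : Matrix (Fin m) (Fin n) F) (i j : Fin n)
    (hL0 : lowNat R j ≠ 0) (hLi : lowNat R i = lowNat R j)
    (r : Fin m) (hr : r.val = lowNat R j - 1) :
    lowNat (addColMul R (R r j / R r i) i j) j < lowNat R j := by
  have hri : R r i ≠ 0 := by
    obtain ⟨a, ha, hav⟩ := lowNat_attained R i (hLi ▸ hL0)
    have : a = r := Fin.ext (by omega)
    rwa [this] at ha
  have hzero : ∀ a : Fin m, r.val ≤ a.val → addColMul R (R r j / R r i) i j a j = 0 := by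
    intro a hra
    rcases eq_or_lt_of_le hra with heq | hlt
    · have : a = r := Fin.ext heq.symm
      subst this
      simp [addColMul, div_mul_cancel₀ _ hri]
    · have haj : R a j = 0 := by
        by_contra h
        have := le_lowNat R j a h
        omega
      have hai : R a i = 0 := by
        by_contra h
        have := le_lowNat R i a h
        omega
      simp [addColMul, haj, hai]
  have : lowNat (addColMul R (R r j / R r i) i j) j ≤ r.val := by
    apply Finset.sup_le
    intro a ha
    simp only [Finset.mem_filter] at ha
    by_contra h
    exact ha.2 (hzero a (by omega))
  omega

/-- The invariant maintained by the lazy reduction while processing column `j`. -/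
def RedInv (s : RedState F m n) (j : ℕ) : Prop :=
  (∀ a b : Fin n, b < a → s.V a b = 0) ∧
  (∀ a b : Fin n, j ≤ a.val → s.U a b = if a = b then 1 else 0) ∧
  (∀ a b : Fin n, j < b.val → s.V a b = if a = b then 1 else 0) ∧
  (∀ a b : Fin n, a < b → lowNat s.R a < lowNat s.R b → s.U a b = 0 ∧ s.V a b = 0)

lemma RedInv.mono {s : RedState F m n} {j j' : ℕ} (h : RedInv s j) (hjj : j ≤ j') : RedInv s j' :=
  ⟨h.1, fun a b ha => h.2.1 a b (le_trans hjj ha),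
   fun a b hb => h.2.2.1 a b (lt_of_le_of_lt hjj hb), h.2.2.2⟩

lemma step_inv (s : RedState F m n) (j i : Fin n) (hinv : RedInv s j.val)
    (hij : i < j) (hL0 : lowNat s.R j ≠ 0) (hLi : lowNat s.R i = lowNat s.R j)
    (r : Fin m) (hr : r.val = lowNat s.R j - 1) :
    RedInv (⟨addColMul s.R (s.R r j / s.R r i) i j,
          addColMul s.V (s.R r j / s.R r i) i j,
          addRowMul s.U (s.R r j / s.R r i) i j⟩ : RedState F m n) j.val := by
  obtain ⟨hVt, hU, hV, hQ⟩ := hinv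
  set α := s.R r j / s.R r i with hα
  have hlow_lt := lowNat_addColMul_lt s.R i j hL0 hLi r hr
  have hlow_ne := lowNat_addColMul_ne s.R α i j
  refine ⟨?_, ?_, ?_, ?_⟩
  · -- V stays strictly upper triangular
    intro a b hba
    by_cases hbj : b = j
    · subst hbj
      have h1 : s.V a b = 0 := hVt a b hba
      have h2 : s.V a i = 0 := hVt a i (lt_trans hij hba)
      simp [addColMul, h1, h2]
    · simp [addColMul, hbj, hVt a b hba]
  · -- rows ≥ j of U are identity rows
    intro a b ha
    have hai : a ≠ i := by
      rintro rfl
      have : a.val < j.val := hij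
      omega
    simp [addRowMul, hai, hU a b ha]
  · -- columns > j of V are identity columns
    intro a b hb
    have hbj : b ≠ j := fun h => by subst h; omega
    simp [addColMul, hbj, hV a b hb]
  · -- the main invariant
    intro a b hab hlow
    by_cases hbj : b = j
    · subst hbj
      -- low of column a is unchanged (a ≠ b = j), and < new low j < old low j
      have haj : a ≠ b := Fin.ne_of_lt hab
      rw [hlow_ne a haj] at hlow
      have hlow' : lowNat s.R a < lowNat s.R b := lt_trans hlow hlow_lt
      have hane : a ≠ i := by
        rintro rfl
        rw [hLi] at hlow'
        exact lt_irrefl _ hlow'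
      have hQa := hQ a b hab hlow'
      constructor
      · simp [addRowMul, hane, hQa.1]
      · rcases lt_trichotomy a i with h | h | h
        · have := (hQ a i h (by omega)).2
          simp [addColMul, hQa.2, this]
        · exact absurd h hane
        · simp [addColMul, hQa.2, hVt a i h]
    · -- column b untouched
      rw [hlow_ne b hbj] at hlow
      by_cases haj : a = j
      · subst haj
        have hji : a ≠ i := by
          rintro rfl
          exact lt_irrefl _ hij
        have habne : a ≠ b := Fin.ne_of_lt hab
        constructor
        · simp [addRowMul, hji, hU a b le_rfl, habne]
        · have hb' : a.val < b.val := hab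
          simp [addColMul, hbj, hV a b hb', habne]
      · rw [hlow_ne a haj] at hlow
        have hQa := hQ a b hab hlow
        constructor
        · by_cases hai : a = i
          · subst hai
            have hjb : (j : Fin n) ≠ b := by
              rintro rfl
              exact hbj rfl
            simp [addRowMul, hQa.1, hU j b le_rfl, hjb]
          · simp [addRowMul, hai, hQa.1]
        · simp [addColMul, hbj, hQa.2]


lemma reduceColAux_inv : ∀ (fuel : ℕ) (s : RedState F m n) (j : Fin n),
    RedInv s j.val → RedInv (reduceColAux fuel s j) j.val
  | 0, _, _, h => h
  | fuel + 1, s, j, h => by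
    rw [reduceColAux]
    split_ifs with hc
    · exact reduceColAux_inv fuel _ j
        (step_inv s j hc.2.choose h hc.2.choose_spec.1 hc.1 hc.2.choose_spec.2 _ rfl)
    · exact h

lemma foldl_inv : ∀ (l : List (Fin n)), l.Pairwise (· < ·) →
    ∀ (s : RedState F m n) (j : ℕ), RedInv s j → (∀ c ∈ l, j ≤ c.val) →
    ∃ j', RedInv (l.foldl (fun s c => reduceColAux (m + 1) s c) s) j'
  | [], _, s, j, h, _ => ⟨j, h⟩
  | c :: l, hp, s, j, h, hle => by
    simp only [List.foldl_cons]
    refine foldl_inv l hp.of_cons _ c.val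
      (reduceColAux_inv _ _ _ (h.mono (hle c (by simp)))) ?_
    intro c' hc'
    exact le_of_lt (Fin.lt_def.mp (List.rel_of_pairwise_cons hp hc'))


lemma init_inv (D : Matrix (Fin m) (Fin n) F) :
    RedInv (⟨D, 1, 1⟩ : RedState F m n) 0 := by
  refine ⟨?_, ?_, ?_, ?_⟩
  · intro a b hba
    exact Matrix.one_apply_ne (Fin.ne_of_gt hba)
  · intro a b _
    exact Matrix.one_apply
  · intro a b _
    exact Matrix.one_apply
  · intro a b hab _
    exact ⟨Matrix.one_apply_ne (Fin.ne_of_lt hab), Matrix.one_apply_ne (Fin.ne_of_lt hab)⟩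

/-- Lazy reduction lemma: at termination of the lazy reduction, if `τi < τj`
and `low(τi) < low(τj)` (zero columns having the dummy minimal low `0`), then
`U[τi, τj] = 0` and `V[τi, τj] = 0`. -/
theorem lazy_reduction_invariant (D : Matrix (Fin m) (Fin n) F) (τi τj : Fin n)
    (hlt : τi < τj)
    (hlow : lowNat (lazyReduce D).R τi < lowNat (lazyReduce D).R τj) :
    (lazyReduce D).U τi τj = 0 ∧ (lazyReduce D).V τi τj = 0 := by
  obtain ⟨j', hinv⟩ := foldl_inv (List.finRange n) (List.pairwise_lt_finRange n)
    (⟨D, 1, 1⟩ : RedState F m n) 0 (init_inv D) (fun c _ => Nat.zero_le _)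
  exact hinv.2.2.2 τi τj hlt hlow
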